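/- arXiv:1603.01687 — 3 statements merged into one kernel-verified Lean document; each statement's English description precedes it below -/
import Mathlib

section
/- The set π is a compact subset of ℝⁿ; moreover, for every nonzero map m : {1,…,n} → {−1,0,1}, the cell Δ_m is either entirely contained in π or disjoint from π, so that π is the union of exactly those cells Δ_m that intersect π. -/
/-!
On the sphere `X`, membership in `π` depends only on the sign pattern of `x`, since `δ₊`, `δ₋`
and `δ₀` do. A point `x` of a cell `Δ_m` has sign pattern `m`: the identity
`Σ d_i m_i x_i = 1 = Σ d_i |x_i|` together with `m_i x_i ≤ |x_i|` and `d_i > 0` forces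
`m_i x_i = |x_i|`. Hence a cell meeting `π` lies in `π`, and each `x ∈ π` lies in the cell of its
own sign pattern.

For compactness, `δ₊ + δ₋ + δ₀ = δ` turns the defining inequality of `π` into
`δ₊ ≤ δ/2 ∧ δ₋ ≤ δ/2`; both functions are lower semicontinuous (weighted indicators of open
sets), so `π` is closed, and it is bounded since `d_i |x_i| ≤ ‖x‖_{1,d} = 1`.
-/

open Finset

/-- The degree of vertex `i`, as a real number. -/
noncomputable def dd {n : ℕ} (G : SimpleGraph (Fin n)) [DecidableRel G.Adj] (i : Fin n) : ℝ :=
  (G.degree i : ℝ)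

/-- The weighted 1-norm `‖x‖_{1,d} = Σ_i d_i |x_i|`. -/
noncomputable def norm1d {n : ℕ} (G : SimpleGraph (Fin n)) [DecidableRel G.Adj]
    (x : Fin n → ℝ) : ℝ :=
  ∑ i, dd G i * |x i|

/-- `δ₊(x) = Σ_{i : x_i > 0} d_i`. -/
noncomputable def deltaP {n : ℕ} (G : SimpleGraph (Fin n)) [DecidableRel G.Adj]
    (x : Fin n → ℝ) : ℝ :=
  ∑ i, if 0 < x i then dd G i else 0

/-- `δ₋(x) = Σ_{i : x_i < 0} d_i`. -/
noncomputable def deltaM {n : ℕ} (G : SimpleGraph (Fin n)) [DecidableRel G.Adj]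
    (x : Fin n → ℝ) : ℝ :=
  ∑ i, if x i < 0 then dd G i else 0

/-- `δ₀(x) = Σ_{i : x_i = 0} d_i`. -/
noncomputable def delta0 {n : ℕ} (G : SimpleGraph (Fin n)) [DecidableRel G.Adj]
    (x : Fin n → ℝ) : ℝ :=
  ∑ i, if x i = 0 then dd G i else 0

/-- `δ = Σ_i d_i`. -/
noncomputable def deltaTot {n : ℕ} (G : SimpleGraph (Fin n)) [DecidableRel G.Adj] : ℝ :=
  ∑ i, dd G i

/-- The set `X = {x : ‖x‖_{1,d} = 1}`. -/
def Xset {n : ℕ} (G : SimpleGraph (Fin n)) [DecidableRel G.Adj] : Set (Fin n → ℝ) :=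
  {x | norm1d G x = 1}

/-- The feasible set `π = {x ∈ X : |δ₊(x) − δ₋(x)| ≤ δ₀(x)}`. -/
def piSet {n : ℕ} (G : SimpleGraph (Fin n)) [DecidableRel G.Adj] : Set (Fin n → ℝ) :=
  {x | norm1d G x = 1 ∧ |deltaP G x - deltaM G x| ≤ delta0 G x}

/-- The cell `Δ_m` associated with a sign vector `m : {1,…,n} → {−1,0,1}`:
all `x ∈ X` with `Σ_i d_i m(i) x_i = 1` and `m(i) x_i > 0` whenever `m(i) ≠ 0`. -/
def cell {n : ℕ} (G : SimpleGraph (Fin n)) [DecidableRel G.Adj] (m : Fin n → ℤ) :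
    Set (Fin n → ℝ) :=
  {x | norm1d G x = 1 ∧ (∑ i, dd G i * (m i : ℝ) * x i) = 1 ∧
    ∀ i, m i ≠ 0 → 0 < (m i : ℝ) * x i}

open SignType

section
variable {n : ℕ} (G : SimpleGraph (Fin n)) [DecidableRel G.Adj]

lemma dd_nonneg (i : Fin n) : 0 ≤ dd G i := Nat.cast_nonneg _

lemma continuous_norm1d : Continuous (norm1d G) := by
  unfold norm1d
  fun_prop

lemma lowerSemicontinuous_deltaP : LowerSemicontinuous (deltaP G) := by
  have h : deltaP G = fun x => ∑ i, {x : Fin n → ℝ | 0 < x i}.indicator (fun _ => dd G i) x := by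
    ext x
    simp [deltaP, Set.indicator_apply]
  rw [h]
  exact lowerSemicontinuous_sum fun i _ =>
    (isOpen_lt continuous_const (continuous_apply i)).lowerSemicontinuous_indicator (dd_nonneg G i)

lemma lowerSemicontinuous_deltaM : LowerSemicontinuous (deltaM G) := by
  have h : deltaM G = fun x => ∑ i, {x : Fin n → ℝ | x i < 0}.indicator (fun _ => dd G i) x := by
    ext x
    simp [deltaM, Set.indicator_apply]
  rw [h]
  exact lowerSemicontinuous_sum fun i _ =>
    (isOpen_lt (continuous_apply i) continuous_const).lowerSemicontinuous_indicator (dd_nonneg G i)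

lemma deltaP_add_deltaM_add_delta0 (x : Fin n → ℝ) :
    deltaP G x + deltaM G x + delta0 G x = deltaTot G := by
  simp only [deltaP, deltaM, delta0, deltaTot, ← Finset.sum_add_distrib]
  refine Finset.sum_congr rfl fun i _ => ?_
  rcases lt_trichotomy (x i) 0 with h | h | h
  · simp [h, h.ne, h.not_gt]
  · simp [h]
  · simp [h, h.ne', h.not_gt]

lemma mem_piSet_iff {x : Fin n → ℝ} :
    x ∈ piSet G ↔
      norm1d G x = 1 ∧ deltaP G x ≤ deltaTot G / 2 ∧ deltaM G x ≤ deltaTot G / 2 := by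
  have := deltaP_add_deltaM_add_delta0 G x
  rw [piSet, Set.mem_ofPred_eq, abs_le]
  constructor <;> rintro ⟨h₁, h₂, h₃⟩ <;> exact ⟨h₁, by linarith, by linarith⟩

lemma isClosed_piSet : IsClosed (piSet G) := by
  have h : piSet G = norm1d G ⁻¹' {1} ∩ deltaP G ⁻¹' Set.Iic (deltaTot G / 2) ∩
      deltaM G ⁻¹' Set.Iic (deltaTot G / 2) := by
    ext x
    simp only [mem_piSet_iff, Set.mem_inter_iff, Set.mem_preimage, Set.mem_singleton_iff,
      Set.mem_Iic, and_assoc]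
  rw [h]
  exact ((isClosed_singleton.preimage (continuous_norm1d G)).inter
    ((lowerSemicontinuous_deltaP G).isClosed_preimage _)).inter
    ((lowerSemicontinuous_deltaM G).isClosed_preimage _)

lemma abs_le_inv_dd_of_norm1d_eq_one {x : Fin n → ℝ} (hx : norm1d G x = 1) {i : Fin n}
    (hd : 0 < dd G i) : |x i| ≤ (dd G i)⁻¹ := by
  have : dd G i * |x i| ≤ 1 := hx ▸ Finset.single_le_sum
    (fun j _ => mul_nonneg (dd_nonneg G j) (abs_nonneg (x j))) (Finset.mem_univ i)
  rwa [← mul_one (dd G i)⁻¹, le_inv_mul_iff₀ hd]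

lemma isCompact_piSet (hd : ∀ i, 0 < dd G i) : IsCompact (piSet G) := by
  refine (isCompact_univ_pi fun i => isCompact_Icc (a := -(dd G i)⁻¹) (b := (dd G i)⁻¹))
    |>.of_isClosed_subset (isClosed_piSet G) fun x hx i _ => ?_
  exact abs_le.1 (abs_le_inv_dd_of_norm1d_eq_one G hx.1 (hd i))

variable {G}

lemma deltaP_congr_sign {x y : Fin n → ℝ} (h : ∀ i, sign (x i) = sign (y i)) :
    deltaP G x = deltaP G y :=
  Finset.sum_congr rfl fun i _ =>
    if_congr (by rw [← sign_eq_one_iff, h, sign_eq_one_iff]) rfl rfl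

lemma deltaM_congr_sign {x y : Fin n → ℝ} (h : ∀ i, sign (x i) = sign (y i)) :
    deltaM G x = deltaM G y :=
  Finset.sum_congr rfl fun i _ =>
    if_congr (by rw [← sign_eq_neg_one_iff, h, sign_eq_neg_one_iff]) rfl rfl

lemma delta0_congr_sign {x y : Fin n → ℝ} (h : ∀ i, sign (x i) = sign (y i)) :
    delta0 G x = delta0 G y :=
  Finset.sum_congr rfl fun i _ =>
    if_congr (by rw [← sign_eq_zero_iff, h, sign_eq_zero_iff]) rfl rfl

lemma mem_piSet_congr_sign {x y : Fin n → ℝ} (hxy : norm1d G x = norm1d G y)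
    (h : ∀ i, sign (x i) = sign (y i)) : x ∈ piSet G ↔ y ∈ piSet G := by
  simp only [piSet, Set.mem_ofPred_eq, hxy, deltaP_congr_sign h, deltaM_congr_sign h,
    delta0_congr_sign h]

lemma mul_eq_abs_of_mem_cell (hd : ∀ i, 0 < dd G i) {m : Fin n → ℤ} (hm : ∀ i, |m i| ≤ 1)
    {x : Fin n → ℝ} (hx : x ∈ cell G m) (i : Fin n) : (m i : ℝ) * x i = |x i| := by
  have hle : ∀ j, dd G j * (m j : ℝ) * x j ≤ dd G j * |x j| := fun j => by
    have hmj : |(m j : ℝ)| ≤ 1 := by exact_mod_cast hm j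
    rw [mul_assoc]
    gcongr
    · exact dd_nonneg G j
    calc (m j : ℝ) * x j ≤ |(m j : ℝ)| * |x j| := abs_mul (m j : ℝ) (x j) ▸ le_abs_self _
      _ ≤ |x j| := mul_le_of_le_one_left (abs_nonneg _) hmj
  have := (Finset.sum_eq_sum_iff_of_le fun j _ => hle j).1 (hx.2.1.trans hx.1.symm) i
    (Finset.mem_univ i)
  exact mul_left_cancel₀ (hd i).ne' (by rw [← mul_assoc]; exact this)

lemma sign_eq_of_mem_cell (hd : ∀ i, 0 < dd G i) {m : Fin n → ℤ} (hm : ∀ i, |m i| ≤ 1)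
    {x : Fin n → ℝ} (hx : x ∈ cell G m) (i : Fin n) : sign (x i) = sign (m i : ℝ) := by
  by_cases h0 : m i = 0
  · have hx0 : x i = 0 := by
      simpa [h0, eq_comm] using mul_eq_abs_of_mem_cell hd hm hx i
    simp [hx0, h0]
  · rcases mul_pos_iff.1 (hx.2.2 i h0) with ⟨hm', hx'⟩ | ⟨hm', hx'⟩
    · rw [sign_pos hm', sign_pos hx']
    · rw [sign_neg hm', sign_neg hx']

lemma cell_subset_piSet (hd : ∀ i, 0 < dd G i) {m : Fin n → ℤ} (hm : ∀ i, |m i| ≤ 1)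
    (h : (cell G m ∩ piSet G).Nonempty) : cell G m ⊆ piSet G := by
  obtain ⟨y, hy, hyπ⟩ := h
  intro x hx
  exact (mem_piSet_congr_sign (hx.1.trans hy.1.symm) fun i =>
    (sign_eq_of_mem_cell hd hm hx i).trans (sign_eq_of_mem_cell hd hm hy i).symm).2 hyπ

lemma mem_cell_sign {x : Fin n → ℝ} (hx : norm1d G x = 1) :
    x ∈ cell G fun i => (sign (x i) : ℤ) := by
  have hsign : ∀ i, ((sign (x i) : ℤ) : ℝ) * x i = |x i| := fun i => by
    rw [SignType.intCast_cast, sign_mul_self]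
  refine ⟨hx, ?_, fun i hi => ?_⟩
  · simp only [mul_assoc, hsign]
    exact hx
  · rw [hsign, abs_pos]
    rintro h
    simp [h] at hi

lemma ne_zero_of_mem_cell {m : Fin n → ℤ} {x : Fin n → ℝ} (hx : x ∈ cell G m) : m ≠ 0 := by
  rintro rfl
  simpa using hx.2.1

end

/-- `π` is compact; each cell `Δ_m` (for a nonzero map `m : {1,…,n} → {−1,0,1}`) is either
contained in `π` or disjoint from it; and `π` is the union of exactly those cells that
intersect `π`. -/
theorem stmt2 {n : ℕ} (G : SimpleGraph (Fin n)) [DecidableRel G.Adj]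
    (hd : ∀ i, 0 < dd G i) :
    IsCompact (piSet G) ∧
    (∀ m : Fin n → ℤ, (∀ i, m i = -1 ∨ m i = 0 ∨ m i = 1) → m ≠ 0 →
      (cell G m ⊆ piSet G ∨ cell G m ∩ piSet G = ∅)) ∧
    piSet G = ⋃₀ {C | ∃ m : Fin n → ℤ, (∀ i, m i = -1 ∨ m i = 0 ∨ m i = 1) ∧ m ≠ 0 ∧
      C = cell G m ∧ (cell G m ∩ piSet G).Nonempty} := by
  have abs_le_one {m : Fin n → ℤ} (hm : ∀ i, m i = -1 ∨ m i = 0 ∨ m i = 1) (i : Fin n) :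
      |m i| ≤ 1 := by
    rcases hm i with h | h | h <;> simp [h]
  refine ⟨isCompact_piSet G hd, fun m hm _ => ?_, subset_antisymm (fun x hx => ?_) ?_⟩
  · exact (Set.eq_empty_or_nonempty _).symm.imp (cell_subset_piSet hd (abs_le_one hm)) id
  · have hsign (i : Fin n) :
        (sign (x i) : ℤ) = -1 ∨ (sign (x i) : ℤ) = 0 ∨ (sign (x i) : ℤ) = 1 := by
      cases sign (x i) <;> simp
    have hx_cell := mem_cell_sign hx.1
    exact ⟨_, ⟨_, hsign, ne_zero_of_mem_cell hx_cell, rfl, x, hx_cell, hx⟩, hx_cell⟩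
  · rintro x ⟨_, ⟨m, hm, -, rfl, hne⟩, hx⟩
    exact cell_subset_piSet hd (abs_le_one hm) hne hx
end

section
/- If (μ, x) is an eigenpair of the graph 1-Laplacian Δ₁, then I(x) = μ; moreover, if μ ≠ 0, then there exist θ_i ∈ Sgn(x_i) for each i such that Σ_i d_i θ_i = 0 (i.e., 0 ∈ Σ_i d_i Sgn(x_i)). -/
open Finset

/-- The set-valued sign: `Sgn(t) = {1}` if `t > 0`, `{−1}` if `t < 0`, `[−1,1]` if `t = 0`. -/
noncomputable def sgnSet (t : ℝ) : Set ℝ :=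
  if 0 < t then {1} else if t < 0 then {-1} else Set.Icc (-1) 1

/-- `(μ, x)` is an eigenpair of the graph 1-Laplacian `Δ₁`: `x ∈ X` and there exist reals
`z_{ij}` for adjacent pairs with `z_{ij} ∈ Sgn(x_i − x_j)`, `z_{ji} = −z_{ij}`, and
`Σ_{j∼i} z_{ij} ∈ μ d_i Sgn(x_i)` for every vertex `i`. -/
noncomputable def IsEigenpair {n : ℕ} (G : SimpleGraph (Fin n)) [DecidableRel G.Adj]
    (μ : ℝ) (x : Fin n → ℝ) : Prop :=
  norm1d G x = 1 ∧
  ∃ z : Fin n → Fin n → ℝ,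
    (∀ i j, G.Adj i j → z i j ∈ sgnSet (x i - x j)) ∧
    (∀ i j, G.Adj i j → z j i = - z i j) ∧
    (∀ i, ∃ s ∈ sgnSet (x i), (∑ j ∈ G.neighborFinset i, z i j) = μ * dd G i * s)

/-- `I(x) = (1/2) Σ_{i,j} a_{ij} |x_i − x_j|`, with `a` the adjacency matrix. -/
noncomputable def Ifun {n : ℕ} (G : SimpleGraph (Fin n)) [DecidableRel G.Adj]
    (x : Fin n → ℝ) : ℝ :=
  (1 / 2) * ∑ i, ∑ j, (if G.Adj i j then (1 : ℝ) else 0) * |x i - x j|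

/-
Pair the eigen-equation `Σ_{j∼i} z_{ij} = μ d_i s_i` with `x_i` and sum over `i`. Since `s_i x_i = |x_i|`,
the right-hand side becomes `μ ‖x‖_{1,d} = μ`. On the left, antisymmetry of `z` turns
`Σ_i x_i Σ_j z_{ij}` into `½ Σ_{i,j} z_{ij} (x_i − x_j) = ½ Σ_{i,j} a_{ij} |x_i − x_j| = I(x)`.
Summing the eigen-equation without the weight `x_i` gives `0 = μ Σ_i d_i s_i` by antisymmetry, so
`θ = s` works when `μ ≠ 0`.
-/

theorem mul_eq_abs_of_mem_sgnSet {s t : ℝ} (h : s ∈ sgnSet t) : s * t = |t| := by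
  unfold sgnSet at h
  split_ifs at h with hpos hneg
  · rw [Set.mem_singleton_iff.1 h, abs_of_pos hpos, one_mul]
  · rw [Set.mem_singleton_iff.1 h, abs_of_neg hneg, neg_one_mul]
  · simp [le_antisymm (not_lt.1 hpos) (not_lt.1 hneg)]

section Antisymmetric

variable {ι R : Type*} [Fintype ι] [CommRing R] {F : ι → ι → R}

theorem two_mul_sum_mul_sum_of_antisymm (hF : ∀ i j, F j i = -F i j) (x : ι → R) :
    2 * ∑ i, x i * ∑ j, F i j = ∑ i, ∑ j, F i j * (x i - x j) := by
  have hswap : ∑ i, ∑ j, F i j * x j = -∑ i, ∑ j, F i j * x i := by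
    rw [Finset.sum_comm, ← Finset.sum_neg_distrib]
    refine Finset.sum_congr rfl fun i _ => ?_
    rw [← Finset.sum_neg_distrib]
    exact Finset.sum_congr rfl fun j _ => by rw [hF, neg_mul]
  calc 2 * ∑ i, x i * ∑ j, F i j = 2 * ∑ i, ∑ j, F i j * x i := by
        congr 1
        exact Finset.sum_congr rfl fun i _ => by rw [← Finset.sum_mul, mul_comm]
    _ = ∑ i, ∑ j, F i j * x i - ∑ i, ∑ j, F i j * x j := by rw [hswap]; ring
    _ = ∑ i, ∑ j, F i j * (x i - x j) := by simp only [mul_sub, Finset.sum_sub_distrib]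

theorem sum_sum_eq_zero_of_antisymm [NoZeroDivisors R] [CharZero R]
    (hF : ∀ i j, F j i = -F i j) : ∑ i, ∑ j, F i j = 0 := by
  have h := two_mul_sum_mul_sum_of_antisymm hF 1
  simp only [Pi.one_apply, one_mul, sub_self, mul_zero, Finset.sum_const_zero] at h
  exact (mul_eq_zero.1 h).resolve_left two_ne_zero

end Antisymmetric

section EdgeFlow

variable {V : Type*} (G : SimpleGraph V) [DecidableRel G.Adj] (z : V → V → ℝ)

def edgeFlow (i j : V) : ℝ :=
  if G.Adj i j then z i j else 0

variable {G z}

theorem sum_edgeFlow [Fintype V] (i : V) :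
    ∑ j, edgeFlow G z i j = ∑ j ∈ G.neighborFinset i, z i j := by
  simp only [edgeFlow]
  rw [SimpleGraph.neighborFinset_eq_filter, Finset.sum_filter]

theorem edgeFlow_antisymm (hz : ∀ i j, G.Adj i j → z j i = -z i j) (i j : V) :
    edgeFlow G z j i = -edgeFlow G z i j := by
  by_cases h : G.Adj i j
  · simp [edgeFlow, h, h.symm, hz i j h]
  · have h' : ¬G.Adj j i := fun h' => h h'.symm
    simp [edgeFlow, h, h']

theorem edgeFlow_mul_sub {x : V → ℝ} (hz : ∀ i j, G.Adj i j → z i j ∈ sgnSet (x i - x j))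
    (i j : V) :
    edgeFlow G z i j * (x i - x j) = (if G.Adj i j then (1 : ℝ) else 0) * |x i - x j| := by
  by_cases h : G.Adj i j
  · simp [edgeFlow, h, mul_eq_abs_of_mem_sgnSet (hz i j h)]
  · simp [edgeFlow, h]

end EdgeFlow

theorem Ifun_eq_sum_mul_sum_neighborFinset {n : ℕ} {G : SimpleGraph (Fin n)} [DecidableRel G.Adj]
    {x : Fin n → ℝ} {z : Fin n → Fin n → ℝ}
    (hsgn : ∀ i j, G.Adj i j → z i j ∈ sgnSet (x i - x j))
    (hanti : ∀ i j, G.Adj i j → z j i = -z i j) :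
    Ifun G x = ∑ i, x i * ∑ j ∈ G.neighborFinset i, z i j := by
  have h := two_mul_sum_mul_sum_of_antisymm (edgeFlow_antisymm hanti) x
  simp only [sum_edgeFlow, edgeFlow_mul_sub hsgn] at h
  rw [Ifun, ← h]
  ring

theorem stmt9_general {n : ℕ} (G : SimpleGraph (Fin n)) [DecidableRel G.Adj]
    (μ : ℝ) (x : Fin n → ℝ) (hpair : IsEigenpair G μ x) :
    Ifun G x = μ ∧
    (μ ≠ 0 → ∃ θ : Fin n → ℝ, (∀ i, θ i ∈ sgnSet (x i)) ∧ (∑ i, dd G i * θ i) = 0) := by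
  obtain ⟨hnorm, z, hsgn, hanti, hrow⟩ := hpair
  choose s hs hrow using hrow
  refine ⟨?_, fun hμ => ⟨s, hs, ?_⟩⟩
  · calc Ifun G x = ∑ i, x i * ∑ j ∈ G.neighborFinset i, z i j :=
          Ifun_eq_sum_mul_sum_neighborFinset hsgn hanti
      _ = ∑ i, μ * (dd G i * |x i|) := by
          refine Finset.sum_congr rfl fun i _ => ?_
          rw [hrow, ← mul_eq_abs_of_mem_sgnSet (hs i)]
          ring
      _ = μ := by rw [← Finset.mul_sum, ← norm1d, hnorm, mul_one]
  · have h := sum_sum_eq_zero_of_antisymm (edgeFlow_antisymm hanti)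
    simp only [sum_edgeFlow, hrow, mul_assoc, ← Finset.mul_sum] at h
    exact (mul_eq_zero.1 h).resolve_left hμ

/-- If `(μ, x)` is an eigenpair of `Δ₁`, then `I(x) = μ`; moreover if `μ ≠ 0` there exist
`θ_i ∈ Sgn(x_i)` with `Σ_i d_i θ_i = 0`, i.e. `0 ∈ Σ_i d_i Sgn(x_i)`. -/
theorem stmt9 {n : ℕ} (G : SimpleGraph (Fin n)) [DecidableRel G.Adj]
    (hd : ∀ i, 0 < dd G i) (μ : ℝ) (x : Fin n → ℝ) (hpair : IsEigenpair G μ x) :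
    Ifun G x = μ ∧
    (μ ≠ 0 → ∃ θ : Fin n → ℝ, (∀ i, θ i ∈ sgnSet (x i)) ∧ (∑ i, dd G i * θ i) = 0) :=
  stmt9_general G μ x hpair
end

section
/- Let G be connected. If (A, Aᶜ) is a Cheeger cut of G, then at least one of the induced subgraphs on A and on Aᶜ is connected. -/
open Finset

/-- `vol(A) = Σ_{i∈A} d_i`. -/
noncomputable def volA {n : ℕ} (G : SimpleGraph (Fin n)) [DecidableRel G.Adj]
    (A : Finset (Fin n)) : ℝ :=
  ∑ i ∈ A, dd G i

/-- `|∂A|`: the number of edges with one endpoint in `A` and the other in `Aᶜ`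
(counted as ordered pairs `(i, j)` with `i ∈ A`, `j ∉ A`, `i ∼ j`). -/
def bdryCard {n : ℕ} (G : SimpleGraph (Fin n)) [DecidableRel G.Adj]
    (A : Finset (Fin n)) : ℕ :=
  (Finset.univ.filter (fun p : Fin n × Fin n => p.1 ∈ A ∧ p.2 ∉ A ∧ G.Adj p.1 p.2)).card

/-- The cut ratio `|∂S| / min(vol(S), vol(Sᶜ))`. -/
noncomputable def cutRatio {n : ℕ} (G : SimpleGraph (Fin n)) [DecidableRel G.Adj]
    (S : Finset (Fin n)) : ℝ :=
  (bdryCard G S : ℝ) / min (volA G S) (volA G Sᶜ)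

/-- The Cheeger constant `h(G)`: the minimum of the cut ratio over nonempty proper subsets. -/
noncomputable def cheegerConst {n : ℕ} (G : SimpleGraph (Fin n)) [DecidableRel G.Adj] : ℝ :=
  sInf {r : ℝ | ∃ S : Finset (Fin n), S.Nonempty ∧ S ≠ Finset.univ ∧ r = cutRatio G S}

/-- `(A, Aᶜ)` is a Cheeger cut: `A` is nonempty and proper and its cut ratio equals `h(G)`. -/
def IsCheegerCut {n : ℕ} (G : SimpleGraph (Fin n)) [DecidableRel G.Adj]
    (A : Finset (Fin n)) : Prop :=
  A.Nonempty ∧ A ≠ Finset.univ ∧ cutRatio G A = cheegerConst G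

/-- The subgraph of `G` induced on `A` is connected. -/
def IndConnected {n : ℕ} (G : SimpleGraph (Fin n)) (A : Finset (Fin n)) : Prop :=
  (G.induce (A : Set (Fin n))).Connected

/-!
Suppose `A = A₁ ⊔ A₂` and `Aᶜ = B₁ ⊔ B₂` with no edges between `A₁` and `A₂` nor between `B₁`
and `B₂`. Put `U = A₁ ∪ B₁`, so that `A ∆ U = A₂ ∪ B₁`. Every edge crossing `A` crosses exactly one
of `U` and `A ∆ U`, and no other edge crosses either, so `|∂U| + |∂(A ∆ U)| = |∂A|`. Writing
`a₁, a₂, b₁, b₂ > 0` for the volumes of the four parts, the denominators satisfy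
`min(a₁ + a₂, b₁ + b₂) < min(a₁ + b₁, a₂ + b₂) + min(a₂ + b₁, a₁ + b₂)`. By the mediant
inequality one of `U`, `A ∆ U` has a strictly smaller cut ratio than `A`, so `A` is not a Cheeger
cut.
-/

open scoped symmDiff

theorem SimpleGraph.exists_separation_of_not_connected_induce {V : Type*} [DecidableEq V]
    {G : SimpleGraph V} {A : Finset V} (hA : A.Nonempty) (h : ¬ (G.induce (A : Set V)).Connected) :
    ∃ A₁ ⊆ A, A₁.Nonempty ∧ (A \ A₁).Nonempty ∧
      ∀ x ∈ A, ∀ y ∈ A, G.Adj x y → (x ∈ A₁ ↔ y ∈ A₁) := by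
  classical
  have : Nonempty (A : Set V) := hA.coe_sort
  obtain ⟨u, v, huv⟩ : ∃ u v, ¬ (G.induce (A : Set V)).Reachable u v := by
    simpa [SimpleGraph.connected_iff, SimpleGraph.Preconnected] using h
  refine ⟨{x ∈ A | ∃ hx : x ∈ A, (G.induce (A : Set V)).Reachable u ⟨x, hx⟩}, filter_subset _ _,
    ⟨u, by simp⟩, ⟨v, by simpa using huv⟩, fun x hx y hy hxy => ?_⟩
  have hadj : (G.induce (A : Set V)).Adj ⟨x, hx⟩ ⟨y, hy⟩ := hxy
  simp only [mem_filter, hx, hy, exists_true_left, true_and]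
  exact ⟨fun h => h.trans hadj.reachable, fun h => h.trans hadj.symm.reachable⟩

lemma min_add_lt_min_add_min {a₁ a₂ b₁ b₂ : ℝ} (h₁ : 0 < a₁) (h₂ : 0 < a₂) (h₃ : 0 < b₁)
    (h₄ : 0 < b₂) :
    min (a₁ + a₂) (b₁ + b₂) < min (a₁ + b₁) (a₂ + b₂) + min (a₂ + b₁) (a₁ + b₂) := by
  rcases le_total (a₁ + b₁) (a₂ + b₂) with h | h <;>
    rcases le_total (a₂ + b₁) (a₁ + b₂) with h' | h' <;>
    simp only [min_eq_left, min_eq_right, h, h'] <;>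
    linarith [min_le_left (a₁ + a₂) (b₁ + b₂), min_le_right (a₁ + a₂) (b₁ + b₂)]

lemma div_lt_or_div_lt_of_lt_add {b c m p q : ℝ} (hbc : 0 < b + c) (hm : 0 < m) (hp : 0 < p)
    (hq : 0 < q) (hmpq : m < p + q) : b / p < (b + c) / m ∨ c / q < (b + c) / m := by
  by_contra! ⟨hb, hc⟩
  rw [le_div_iff₀ hp] at hb
  rw [le_div_iff₀ hq] at hc
  have := mul_lt_mul_of_pos_left hmpq (div_pos hbc hm)
  rw [div_mul_cancel₀ _ hm.ne'] at this
  linarith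


section Cheeger

variable {n : ℕ} (G : SimpleGraph (Fin n)) [DecidableRel G.Adj]

lemma volA_pos (hn : 2 ≤ n) (hG : G.Connected) {S : Finset (Fin n)} (hS : S.Nonempty) :
    0 < volA G S := by
  have : Nontrivial (Fin n) := Fin.nontrivial_iff_two_le.2 hn
  exact sum_pos (fun i _ => Nat.cast_pos.2 (hG.preconnected.degree_pos_of_nontrivial i)) hS

lemma volA_eq_add_of_forall_mem_iff {S P Q : Finset (Fin n)}
    (h : ∀ x, (x ∈ S ↔ x ∈ P ∨ x ∈ Q) ∧ ¬(x ∈ P ∧ x ∈ Q)) :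
    volA G S = volA G P + volA G Q := by
  rw [volA, volA, volA, ← sum_union (disjoint_left.2 fun x hP hQ => (h x).2 ⟨hP, hQ⟩)]
  congr 1
  ext x
  simp [(h x).1]

lemma cutRatio_nonneg (S : Finset (Fin n)) : 0 ≤ cutRatio G S := by
  have hvol (T : Finset (Fin n)) : 0 ≤ volA G T := sum_nonneg fun i _ => Nat.cast_nonneg _
  exact div_nonneg (Nat.cast_nonneg _) (le_min (hvol S) (hvol Sᶜ))

lemma cheegerConst_le_cutRatio {S : Finset (Fin n)} (hS : S.Nonempty) (hSu : S ≠ univ) :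
    cheegerConst G ≤ cutRatio G S :=
  csInf_le ⟨0, by rintro r ⟨T, -, -, rfl⟩; exact cutRatio_nonneg G T⟩ ⟨S, hS, hSu, rfl⟩

lemma bdryCard_pos (hG : G.Connected) {S : Finset (Fin n)} (hS : S.Nonempty) (hSu : S ≠ univ) :
    0 < bdryCard G S := by
  obtain ⟨a, ha⟩ := hS
  obtain ⟨b, -, hb⟩ := exists_of_ssubset (ssubset_univ_iff.2 hSu)
  obtain ⟨d, -, hd₁, hd₂⟩ := (hG.preconnected a b).some.exists_boundary_dart (S : Set (Fin n))
    (mem_coe.2 ha) (by simpa using hb)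
  exact card_pos.2 ⟨(d.fst, d.snd), mem_filter.2 ⟨mem_univ _, hd₁, hd₂, d.adj⟩⟩

def crossingPairs (S : Finset (Fin n)) : Finset (Fin n × Fin n) :=
  {p | G.Adj p.1 p.2 ∧ ¬(p.1 ∈ S ↔ p.2 ∈ S)}

lemma card_crossingPairs (S : Finset (Fin n)) : #(crossingPairs G S) = 2 * bdryCard G S := by
  have hsplit : crossingPairs G S =
      univ.filter (fun p : Fin n × Fin n => p.1 ∈ S ∧ p.2 ∉ S ∧ G.Adj p.1 p.2) ∪
        univ.filter (fun p : Fin n × Fin n => p.2 ∈ S ∧ p.1 ∉ S ∧ G.Adj p.2 p.1) := by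
    ext p
    simp only [crossingPairs, mem_union, mem_filter, mem_univ, true_and, G.adj_comm p.2]
    tauto
  have hswap : #(univ.filter (fun p : Fin n × Fin n => p.2 ∈ S ∧ p.1 ∉ S ∧ G.Adj p.2 p.1)) =
      bdryCard G S :=
    card_equiv (Equiv.prodComm _ _) (by simp)
  rw [hsplit, card_union_of_disjoint (disjoint_left.2 (by simp +contextual)), hswap, bdryCard]
  ring

lemma bdryCard_add_bdryCard_symmDiff {A U : Finset (Fin n)}
    (hU : ∀ x y, G.Adj x y → (x ∈ A ↔ y ∈ A) → (x ∈ U ↔ y ∈ U)) :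
    bdryCard G U + bdryCard G (A ∆ U) = bdryCard G A := by
  -- membership in `A ∆ U` is the xor of membership in `A` and in `U`
  have hunion : crossingPairs G A = crossingPairs G U ∪ crossingPairs G (A ∆ U) := by
    ext ⟨x, y⟩
    have := hU x y
    simp only [crossingPairs, mem_union, mem_filter, mem_univ, true_and, mem_symmDiff]
    tauto
  have hdisj : Disjoint (crossingPairs G U) (crossingPairs G (A ∆ U)) := by
    refine disjoint_left.2 fun ⟨x, y⟩ hU' hT' => ?_
    have := hU x y
    simp only [crossingPairs, mem_filter, mem_univ, true_and, mem_symmDiff] at hU' hT'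
    tauto
  have := card_union_of_disjoint hdisj
  rw [← hunion, card_crossingPairs, card_crossingPairs, card_crossingPairs] at this
  omega

lemma exists_cutRatio_lt_of_forall_adj_mem_iff (hn : 2 ≤ n) (hG : G.Connected)
    {A U : Finset (Fin n)} (hU : ∀ x y, G.Adj x y → (x ∈ A ↔ y ∈ A) → (x ∈ U ↔ y ∈ U))
    {a₁ a₂ b₁ b₂ : Fin n} (ha₁ : a₁ ∈ A ∩ U) (ha₂ : a₂ ∈ A \ U) (hb₁ : b₁ ∈ U \ A)
    (hb₂ : b₂ ∉ A ∪ U) :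
    ∃ S, S.Nonempty ∧ S ≠ univ ∧ cutRatio G S < cutRatio G A := by
  have hne {S : Finset (Fin n)} {y : Fin n} (hy : y ∉ S) : S ≠ univ :=
    (ne_of_mem_of_not_mem' (mem_univ y) hy).symm
  have hv₁ := volA_pos G hn hG ⟨a₁, ha₁⟩
  have hv₂ := volA_pos G hn hG ⟨a₂, ha₂⟩
  have hv₃ := volA_pos G hn hG ⟨b₁, hb₁⟩
  have hv₄ := volA_pos G hn hG ⟨b₂, mem_compl.2 hb₂⟩
  simp only [mem_inter, mem_sdiff, mem_union, not_or] at ha₁ ha₂ hb₁ hb₂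
  have hA : volA G A = volA G (A ∩ U) + volA G (A \ U) :=
    volA_eq_add_of_forall_mem_iff G fun x => by grind [mem_compl, mem_symmDiff]
  have hAc : volA G Aᶜ = volA G (U \ A) + volA G (A ∪ U)ᶜ :=
    volA_eq_add_of_forall_mem_iff G fun x => by grind [mem_compl, mem_symmDiff]
  have hU₁ : volA G U = volA G (A ∩ U) + volA G (U \ A) :=
    volA_eq_add_of_forall_mem_iff G fun x => by grind [mem_compl, mem_symmDiff]
  have hU₂ : volA G Uᶜ = volA G (A \ U) + volA G (A ∪ U)ᶜ :=
    volA_eq_add_of_forall_mem_iff G fun x => by grind [mem_compl, mem_symmDiff]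
  have hT₁ : volA G (A ∆ U) = volA G (A \ U) + volA G (U \ A) :=
    volA_eq_add_of_forall_mem_iff G fun x => by grind [mem_compl, mem_symmDiff]
  have hT₂ : volA G (A ∆ U)ᶜ = volA G (A ∩ U) + volA G (A ∪ U)ᶜ :=
    volA_eq_add_of_forall_mem_iff G fun x => by grind [mem_compl, mem_symmDiff]
  have hmin := min_add_lt_min_add_min hv₁ hv₂ hv₃ hv₄
  rw [← hA, ← hAc, ← hU₁, ← hU₂, ← hT₁, ← hT₂] at hmin
  have hbd : (bdryCard G U : ℝ) + bdryCard G (A ∆ U) = bdryCard G A := by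
    exact_mod_cast bdryCard_add_bdryCard_symmDiff G hU
  have hbA : 0 < (bdryCard G A : ℝ) := Nat.cast_pos.2 (bdryCard_pos G hG ⟨a₁, ha₁.1⟩ (hne hb₂.1))
  rcases div_lt_or_div_lt_of_lt_add (hbd ▸ hbA) (lt_min (by linarith) (by linarith))
    (lt_min (by linarith) (by linarith)) (lt_min (by linarith) (by linarith)) hmin with h | h
  · exact ⟨U, ⟨a₁, ha₁.2⟩, hne ha₂.2, by rwa [cutRatio, cutRatio, ← hbd]⟩
  · refine ⟨A ∆ U, ⟨a₂, by simp [mem_symmDiff, ha₂]⟩, hne (y := a₁) (by simp [mem_symmDiff, ha₁]),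
      by rwa [cutRatio, cutRatio, ← hbd]⟩

lemma exists_cutRatio_lt_of_not_indConnected (hn : 2 ≤ n) (hG : G.Connected)
    {A : Finset (Fin n)} (hA : A.Nonempty) (hAu : A ≠ univ) (hA₁ : ¬ IndConnected G A)
    (hA₂ : ¬ IndConnected G Aᶜ) :
    ∃ S, S.Nonempty ∧ S ≠ univ ∧ cutRatio G S < cutRatio G A := by
  obtain ⟨A₁, hA₁A, ⟨a₁, ha₁⟩, ⟨a₂, ha₂⟩, hA₁⟩ := G.exists_separation_of_not_connected_induce hA hA₁
  obtain ⟨B₁, hB₁A, ⟨b₁, hb₁⟩, ⟨b₂, hb₂⟩, hB₁⟩ := G.exists_separation_of_not_connected_induce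
    (nonempty_iff_ne_empty.2 (by rwa [Ne, compl_eq_empty_iff])) hA₂
  have hA₁B₁ (x) : x ∈ A₁ ∪ B₁ ↔ (x ∈ A ∧ x ∈ A₁ ∨ x ∉ A ∧ x ∈ B₁) := by
    have := @hA₁A x
    have := fun h => mem_compl.1 (@hB₁A x h)
    rw [mem_union]
    tauto
  have ha₂' := mem_sdiff.1 ha₂
  have hb₂' := mem_sdiff.1 hb₂
  refine exists_cutRatio_lt_of_forall_adj_mem_iff G hn hG (U := A₁ ∪ B₁) (fun x y hxy hxyA => ?_)
    (a₁ := a₁) (a₂ := a₂) (b₁ := b₁) (b₂ := b₂) ?_ ?_ ?_ ?_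
  · by_cases hx : x ∈ A
    · have hy := hxyA.1 hx
      simp [hA₁B₁, hx, hy, hA₁ x hx y hy hxy]
    · have hy : y ∉ A := fun hy => hx (hxyA.2 hy)
      simp [hA₁B₁, hx, hy, hB₁ x (mem_compl.2 hx) y (mem_compl.2 hy) hxy]
  · simp [hA₁B₁, hA₁A ha₁, ha₁]
  · simp [hA₁B₁, ha₂'.1, ha₂'.2]
  · simp [hA₁B₁, mem_compl.1 (hB₁A hb₁), hb₁]
  · simp [hA₁B₁, mem_compl.1 hb₂'.1, hb₂'.2]

end Cheeger

/-- For connected `G`: if `(A, Aᶜ)` is a Cheeger cut, then at least one of the induced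
subgraphs on `A` and on `Aᶜ` is connected. -/
theorem stmt13 {n : ℕ} (G : SimpleGraph (Fin n)) [DecidableRel G.Adj]
    (hn : 2 ≤ n) (hG : G.Connected) (A : Finset (Fin n)) (hA : IsCheegerCut G A) :
    IndConnected G A ∨ IndConnected G Aᶜ := by
  obtain ⟨hAne, hAu, hAh⟩ := hA
  by_contra! hdisc
  obtain ⟨S, hS, hSu, hlt⟩ :=
    exists_cutRatio_lt_of_not_indConnected G hn hG hAne hAu hdisc.1 hdisc.2
  exact (cheegerConst_le_cutRatio G hS hSu).not_gt (hAh ▸ hlt)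
end
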